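/- arXiv:1711.03973 — 11 statements merged into one kernel-verified Lean document; each statement's English description precedes it below -/
import Mathlib

section
/- If a sequence x : ℤ → ℝ satisfies the discrete equation -x(i-1) + 2x(i) - x(i+1) = sgn(x(i)) for all i, and x(k) = 0 for some k, then for all n ≥ 1 we have x(k-n) + x(k+n) = 0. -/
/-!
The recurrence is a second-order recurrence with an odd nonlinearity, so `i ↦ -x (2k - i)` is again
a solution. If `x k = 0`, the equation at `k` gives `x (k - 1) = -x (k + 1)`, so this reflected
solution agrees with `x` at `k` and `k + 1`; a solution is determined forwards by two consecutive
values, hence `x (k + n) = -x (k - n)` for every `n ≥ 0`.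
-/

def SolvesSecondDiffEq (f : ℝ → ℝ) (x : ℤ → ℝ) : Prop :=
  ∀ i : ℤ, -x (i - 1) + 2 * x i - x (i + 1) = f (x i)

namespace SolvesSecondDiffEq

variable {f : ℝ → ℝ} {x y : ℤ → ℝ}

theorem eq_of_le_of_eq_of_eq_add_one (hx : SolvesSecondDiffEq f x) (hy : SolvesSecondDiffEq f y)
    {k : ℤ} (h₀ : x k = y k) (h₁ : x (k + 1) = y (k + 1)) {i : ℤ} (hi : k ≤ i) : x i = y i := by
  suffices x i = y i ∧ x (i + 1) = y (i + 1) from this.1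
  induction i, hi using Int.leInduction with
  | base => exact ⟨h₀, h₁⟩
  | succ i _ ih =>
    obtain ⟨hi₀, hi₁⟩ := ih
    have hxi := hx (i + 1)
    have hyi := hy (i + 1)
    rw [add_sub_cancel_right, hi₀, hi₁] at hxi
    rw [add_sub_cancel_right] at hyi
    exact ⟨hi₁, by linarith⟩

theorem reflect (hf : ∀ a, f (-a) = -f a) (hx : SolvesSecondDiffEq f x) (c : ℤ) :
    SolvesSecondDiffEq f (fun i => -x (c - i)) := by
  intro i
  show -(-x (c - (i - 1))) + 2 * -x (c - i) - -x (c - (i + 1)) = f (-x (c - i))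
  rw [show c - (i - 1) = c - i + 1 by ring, show c - (i + 1) = c - i - 1 by ring, hf, ← hx]
  ring

end SolvesSecondDiffEq

/-- If `x : ℤ → ℝ` satisfies `-x(i-1) + 2x(i) - x(i+1) = sgn(x(i))` for all `i`,
and `x k = 0`, then `x(k-n) + x(k+n) = 0` for all `n ≥ 1`. -/
theorem stmt_0 (x : ℤ → ℝ)
    (hrec : ∀ i : ℤ, -x (i - 1) + 2 * x i - x (i + 1) = Real.sign (x i))
    (k : ℤ) (hk : x k = 0) :
    ∀ n : ℤ, 1 ≤ n → x (k - n) + x (k + n) = 0 := by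
  intro n hn
  have hsol : SolvesSecondDiffEq Real.sign x := hrec
  have hrefl := hsol.reflect (fun _ => Real.sign_neg) (2 * k)
  have hk₁ : x (k + 1) = -x (2 * k - (k + 1)) := by
    have hreck := hrec k
    rw [hk, Real.sign_zero] at hreck
    rw [show 2 * k - (k + 1) = k - 1 by ring]
    linarith
  have hk₀ : x k = -x (2 * k - k) := by rw [two_mul, add_sub_cancel_right, hk, neg_zero]
  have hsymm := hsol.eq_of_le_of_eq_of_eq_add_one hrefl hk₀ hk₁ (i := k + n) (by omega)
  rw [show 2 * k - (k + n) = k - n by ring] at hsymm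
  linarith
end

section
/- If a sequence x : ℤ → ℝ satisfies -x(i-1) + 2x(i) - x(i+1) = sgn(x(i)) for all i, and x(0) = 0 and x(k) = 0 for some positive integer k, then the sequence is periodic with period 2k, i.e., x(i + 2k) = x(i) for all i. -/
/-!
The equation is `x (i + 1) = 2 x i - x (i - 1) - sgn (x i)`, and `sgn` is odd. Hence at a zero `c`
of `x` it gives `x (c + 1) = -x (c - 1)`, and the reflection `i ↦ -x (2c - i)` of a solution is again
a solution, so every zero is a centre of antisymmetry. Reflecting first about `k` and then about `0`
is translation by `2k`.
-/

theorem antisymm_about_zero_of_odd_forcing {f : ℝ → ℝ} (hf : Function.Odd f) {x : ℤ → ℝ}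
    (hrec : ∀ i, -x (i - 1) + 2 * x i - x (i + 1) = f (x i)) {c : ℤ} (hc : x c = 0) (i : ℤ) :
    x (c + i) = -x (c - i) := by
  have step : ∀ n : ℕ, x (c + n) = -x (c - n) ∧ x (c + (n + 1)) = -x (c - (n + 1)) := by
    intro n
    induction n with
    | zero =>
      have h := hrec c
      rw [hc, hf.map_zero] at h
      exact ⟨by simp [hc], by push_cast; linarith⟩
    | succ n ih =>
      obtain ⟨hn, hn1⟩ := ih
      have right := hrec (c + (n + 1))
      have left := hrec (c - (n + 1))
      rw [show c + (n + 1) - 1 = c + n by ring, hn, hn1, hf] at right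
      rw [show c - (n + 1) + 1 = c - n by ring] at left
      refine ⟨by exact_mod_cast hn1, ?_⟩
      push_cast
      rw [show c + (n + 1 + 1) = c + (n + 1) + 1 by ring,
        show c - (n + 1 + 1) = c - (n + 1) - 1 by ring]
      linarith
  obtain ⟨n, rfl | rfl⟩ := i.eq_nat_or_neg
  · exact (step n).1
  · rw [sub_neg_eq_add, ← sub_eq_add_neg, (step n).1, neg_neg]

theorem stmt_1_general (x : ℤ → ℝ)
    (hrec : ∀ i : ℤ, -x (i - 1) + 2 * x i - x (i + 1) = Real.sign (x i))
    (k : ℤ) (h0 : x 0 = 0) (hk : x k = 0) :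
    ∀ i : ℤ, x (i + 2 * k) = x i := by
  have sign_odd : Function.Odd Real.sign := fun _ ↦ Real.sign_neg
  intro i
  calc x (i + 2 * k) = x (k + (k + i)) := by ring_nf
    _ = -x (0 - i) := by
      rw [antisymm_about_zero_of_odd_forcing sign_odd hrec hk, zero_sub, sub_add_cancel_left]
    _ = x (0 + i) := (antisymm_about_zero_of_odd_forcing sign_odd hrec h0 i).symm
    _ = x i := by rw [zero_add]

/-- If `x : ℤ → ℝ` satisfies the discrete equation and vanishes at `0` and at `k > 0`,
then `x` is periodic with period `2k`. -/
theorem stmt_1 (x : ℤ → ℝ)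
    (hrec : ∀ i : ℤ, -x (i - 1) + 2 * x i - x (i + 1) = Real.sign (x i))
    (k : ℤ) (hkpos : 0 < k) (h0 : x 0 = 0) (hk : x k = 0) :
    ∀ i : ℤ, x (i + 2 * k) = x i :=
  stmt_1_general x hrec k h0 hk
end

section
/- Let (p, x) : ℕ → ℝ × ℝ evolve by p(i+1) = p(i) - sgn(x(i)), x(i+1) = x(i) + p(i) - sgn(x(i)). If the orbit is periodic with period k ≥ 1, i.e., x(k+1) = x(1) and p(k+1) = p(1), then k·p(1) is an integer; in particular p(1) is rational. -/
/-!
Write `s i ∈ {-1, 0, 1}` for the sign of `x i`. Then `p 1 - p (1 + n)` is an integer (a partial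
sum of signs), while `x (i + 1) - x i = p (i + 1)`, so periodicity of `x` forces the momenta
`p 2, …, p (k + 1)` to sum to zero. Hence `k * p 1 = ∑ j < k, (p 1 - p (j + 2))` is an integer.
-/

open Finset

theorem Real.exists_sign_eq_intCast (r : ℝ) : ∃ m : ℤ, Real.sign r = m := by
  rcases Real.sign_apply_eq r with h | h | h <;> rw [h]
  exacts [⟨-1, by simp⟩, ⟨0, by simp⟩, ⟨1, by simp⟩]

theorem exists_sub_eq_intCast_of_forall_sub_succ {f : ℕ → ℝ} {a : ℕ}
    (h : ∀ i, a ≤ i → ∃ m : ℤ, f i - f (i + 1) = m) (n : ℕ) :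
    ∃ m : ℤ, f a - f (a + n) = m := by
  induction n with
  | zero => exact ⟨0, by simp⟩
  | succ n ih =>
    obtain ⟨m, hm⟩ := ih
    obtain ⟨m', hm'⟩ := h (a + n) (Nat.le_add_right a n)
    exact ⟨m + m', by push_cast; rw [← add_assoc]; linarith⟩

theorem exists_mul_eq_intCast_of_sum_eq_zero {f : ℕ → ℝ} {c : ℝ} {k : ℕ}
    (hf : ∑ j ∈ range k, f j = 0) (hint : ∀ j, ∃ m : ℤ, c - f j = m) :
    ∃ m : ℤ, (k : ℝ) * c = m := by
  choose m hm using hint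
  refine ⟨∑ j ∈ range k, m j, ?_⟩
  calc (k : ℝ) * c = ∑ j ∈ range k, (c - f j) + ∑ j ∈ range k, f j := by
        rw [← sum_add_distrib]; simp
    _ = _ := by rw [hf, add_zero]; push_cast; exact sum_congr rfl fun j _ => hm j

theorem stmt_3_general (p x : ℕ → ℝ) (k : ℕ) (hk : 1 ≤ k)
    (hp : ∀ i, 1 ≤ i → p (i + 1) = p i - Real.sign (x i))
    (hx : ∀ i, 1 ≤ i → x (i + 1) = x i + p i - Real.sign (x i))
    (hxper : x (k + 1) = x 1) :
    (∃ m : ℤ, (k : ℝ) * p 1 = m) ∧ ∃ q : ℚ, p 1 = q := by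
  have hmomentum : ∀ n, ∃ m : ℤ, p 1 - p (1 + n) = m :=
    exists_sub_eq_intCast_of_forall_sub_succ fun i hi => by
      rw [hp i hi, sub_sub_cancel]; exact Real.exists_sign_eq_intCast (x i)
  have hmomentum_sum : ∑ j ∈ range k, p (1 + (j + 1)) = 0 := by
    have hstep : ∀ j, x (1 + (j + 1)) - x (1 + j) = p (1 + (j + 1)) := fun j => by
      rw [← add_assoc, hx _ (Nat.le_add_right 1 j), hp _ (Nat.le_add_right 1 j)]; ring
    have := Finset.sum_range_sub (fun j => x (1 + j)) k
    simp only [hstep] at this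
    rw [this, add_comm 1 k, hxper, add_zero, sub_self]
  obtain ⟨m, hm⟩ := exists_mul_eq_intCast_of_sum_eq_zero hmomentum_sum fun j => hmomentum (j + 1)
  refine ⟨⟨m, hm⟩, m / k, ?_⟩
  have hk0 : (k : ℝ) ≠ 0 := by positivity
  push_cast
  rw [← hm, mul_div_cancel_left₀ _ hk0]

/-- If the orbit of the dynamical system is periodic with period `k ≥ 1`, then `k * p 1`
is an integer; in particular `p 1` is rational. -/
theorem stmt_3 (p x : ℕ → ℝ) (k : ℕ) (hk : 1 ≤ k)
    (hp : ∀ i, 1 ≤ i → p (i + 1) = p i - Real.sign (x i))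
    (hx : ∀ i, 1 ≤ i → x (i + 1) = x i + p i - Real.sign (x i))
    (hxper : x (k + 1) = x 1) (hpper : p (k + 1) = p 1) :
    (∃ m : ℤ, (k : ℝ) * p 1 = m) ∧ ∃ q : ℚ, p 1 = q :=
  stmt_3_general p x k hk hp hx hxper
end

section
/- Suppose the sequence x : ℕ → ℝ satisfies x(j+1) = x(1) + j·P - j(j+1)/2 for 1 ≤ j+1 ≤ j_flip, where P > 0 and x(1) > 0. Then the smallest integer j with x(j+1) < 0 is j_flip = ⌈(P - 1/2) + √((P - 1/2)² + 2x(1))⌉, provided (P - 1/2) + √((P - 1/2)² + 2x(1)) is not an integer. -/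
/-!
Completing the square with `a = P - 1/2` and `D = a² + 2 x(1)` gives
`x(j+1) = (D - (j - a)²) / 2`, so `x(j+1) < 0` exactly when `j` lies outside
`[a - √D, a + √D]`. As `a - √D ≤ 0`, the first nonnegative integer outside this interval is the
first integer above `a + √D`, which is its ceiling when `a + √D` is not an integer.
-/

lemma add_mul_sub_mul_add_one_div_two_eq (P x1 t : ℝ) :
    x1 + t * P - t * (t + 1) / 2 = ((P - 1/2)^2 + 2 * x1 - (t - (P - 1/2))^2) / 2 := by
  ring

theorem stmt_6_general (P x1 : ℝ) (hx1 : 0 < x1)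
    (hnint : ¬ ∃ m : ℤ, (P - 1/2) + Real.sqrt ((P - 1/2)^2 + 2 * x1) = m) :
    let jflip : ℤ := ⌈(P - 1/2) + Real.sqrt ((P - 1/2)^2 + 2 * x1)⌉
    (x1 + jflip * P - jflip * (jflip + 1) / 2 < 0) ∧
      ∀ j : ℤ, 0 ≤ j → j < jflip → ¬ (x1 + j * P - j * (j + 1) / 2 < 0) := by
  intro jflip
  simp only [add_mul_sub_mul_add_one_div_two_eq, not_lt]
  set a := P - 1/2
  set D := a^2 + 2 * x1
  have hD : 0 ≤ D := by positivity
  have ha : a ≤ √D := (le_abs_self a).trans (Real.abs_le_sqrt (by linarith))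
  have hflip : a + √D < jflip := (Int.le_ceil _).lt_of_ne fun h => hnint ⟨jflip, h⟩
  have hflip_lt : (jflip : ℝ) < a + √D + 1 := Int.ceil_lt_add_one _
  refine ⟨?_, fun j hj hjlt => ?_⟩
  · linarith [Real.lt_sq_of_sqrt_lt (x := D) (y := jflip - a) (by linarith)]
  · have hj₀ : (0 : ℝ) ≤ j := by exact_mod_cast hj
    have hj₁ : (j : ℝ) + 1 ≤ jflip := by exact_mod_cast hjlt
    have hsq : (j - a)^2 ≤ D := (Real.sq_le hD).2 ⟨by linarith, by linarith⟩
    linarith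

/-- For `x(j+1) = x(1) + jP - j(j+1)/2` with `P > 0`, `x(1) > 0`, the smallest
nonnegative integer `j` with `x(j+1) < 0` is
`j_flip = ⌈(P - 1/2) + √((P - 1/2)² + 2 x(1))⌉`, provided this quantity is not an
integer. -/
theorem stmt_6 (P x1 : ℝ) (hP : 0 < P) (hx1 : 0 < x1)
    (hnint : ¬ ∃ m : ℤ, (P - 1/2) + Real.sqrt ((P - 1/2)^2 + 2 * x1) = m) :
    let jflip : ℤ := ⌈(P - 1/2) + Real.sqrt ((P - 1/2)^2 + 2 * x1)⌉
    (x1 + jflip * P - jflip * (jflip + 1) / 2 < 0) ∧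
      ∀ j : ℤ, 0 ≤ j → j < jflip → ¬ (x1 + j * P - j * (j + 1) / 2 < 0) :=
  stmt_6_general P x1 hx1 hnint
end

section
/- Define the leading iteration Δ_L(m+1) = Δ_L(m) + 1 + 2p - 2⌈Δ_L(m)⌉ for a fixed rational p. Then for all m and n ≥ 0, Δ_L(m + 2n) = Δ_L(m) + 4np + 2·Σ_{l=0}^{2n-1} (-1)^l ⌈Δ_L(m) + 2lp⌉. -/
/-!
Along the orbit, `Δ(m + k) - Δ(m) - 2kp` is always an integer, so it can be pulled out of the
ceiling: `⌈Δ(m + k)⌉ = ⌈Δ(m) + 2kp⌉ + (Δ(m + k) - Δ(m) - 2kp)`. Hence this deviation `x k` obeys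
the linear recursion `x (k + 1) = -x k + 1 - 2⌈Δ(m) + 2kp⌉`, which telescopes in steps of two into
an alternating sum.
-/

open Finset

theorem sub_sum_range_two_mul_neg_one_pow_mul {R : Type*} [CommRing R] (x b : ℕ → R)
    (hx : ∀ k, x (k + 1) = -x k + b k) (n : ℕ) :
    x (2 * n) = x 0 - ∑ l ∈ range (2 * n), (-1) ^ l * b l := by
  induction n with
  | zero => simp
  | succ n ih =>
    rw [show 2 * (n + 1) = 2 * n + 1 + 1 by ring, hx, hx, sum_range_succ, sum_range_succ, ih,
      pow_succ, pow_mul]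
    ring

section LeadingRecursion

variable {c : ℝ} {Δ : ℕ → ℝ} (hrec : ∀ m, Δ (m + 1) = Δ m + 1 + 2 * c - 2 * (⌈Δ m⌉ : ℝ))
include hrec

theorem exists_int_eq_add_two_mul (m k : ℕ) : ∃ j : ℤ, Δ (m + k) = Δ m + 2 * k * c + j := by
  induction k with
  | zero => exact ⟨0, by simp⟩
  | succ k ih =>
    obtain ⟨j, hj⟩ := ih
    refine ⟨j + 1 - 2 * ⌈Δ (m + k)⌉, ?_⟩
    rw [← add_assoc, hrec, hj]
    push_cast
    ring

theorem ceil_eq_ceil_add_sub (m k : ℕ) :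
    (⌈Δ (m + k)⌉ : ℝ) = ⌈Δ m + 2 * k * c⌉ + (Δ (m + k) - Δ m - 2 * k * c) := by
  obtain ⟨j, hj⟩ := exists_int_eq_add_two_mul hrec m k
  rw [hj, Int.ceil_add_intCast]
  push_cast
  ring

theorem sub_sub_two_mul_succ (m k : ℕ) :
    Δ (m + (k + 1)) - Δ m - 2 * ↑(k + 1) * c =
      -(Δ (m + k) - Δ m - 2 * k * c) + (1 - 2 * ⌈Δ m + 2 * k * c⌉) := by
  rw [← add_assoc, hrec, ceil_eq_ceil_add_sub hrec]
  push_cast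
  ring

end LeadingRecursion

open Finset in
/-- Solving the leading-order recursion: if `Δ_L(m+1) = Δ_L(m) + 1 + 2p - 2⌈Δ_L(m)⌉`,
then `Δ_L(m + 2n) = Δ_L(m) + 4np + 2 Σ_{l=0}^{2n-1} (-1)^l ⌈Δ_L(m) + 2lp⌉`. -/
theorem stmt_10 (p : ℚ) (Δ : ℕ → ℝ)
    (hrec : ∀ m, Δ (m + 1) = Δ m + 1 + 2 * (p : ℝ) - 2 * (⌈Δ m⌉ : ℝ)) :
    ∀ m n : ℕ, Δ (m + 2 * n) =
      Δ m + 4 * n * (p : ℝ) +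
        2 * ∑ l ∈ range (2 * n), (-1 : ℝ)^l * (⌈Δ m + 2 * l * (p : ℝ)⌉ : ℝ) := by
  intro m n
  have htelescope := sub_sum_range_two_mul_neg_one_pow_mul
    (fun k ↦ Δ (m + k) - Δ m - 2 * k * (p : ℝ)) _ (sub_sub_two_mul_succ hrec m) n
  have halternating : ∑ l ∈ range (2 * n), (-1 : ℝ) ^ l = 0 := by
    simp [neg_one_geom_sum]
  simp only [add_zero, mul_sub, mul_one, sum_sub_distrib, halternating, mul_left_comm _ (2 : ℝ),
    ← mul_sum] at htelescope
  push_cast at htelescope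
  linarith
end

section
/- Let p = a/b with a, b coprime positive integers, b mod 4 ≠ 0, and k' = b if b even, 2b if b odd. Let Δ_L satisfy Δ_L(m+1) = Δ_L(m) + 1 + 2p - 2⌈Δ_L(m)⌉. If Δ_L(m) + 2lp ∉ ℤ for 0 ≤ l < k', then Δ_L(m + k') = Δ_L(m). -/
/-!
Write `q = 2p` and `f x = x + 1 + q - 2⌈x⌉`. Since `f (x + n) = f x - n` for integers `n`, the second
iterate is `f (f x) = x + 2q - 2(⌈x + q⌉ - ⌈x⌉)`, and every iterate differs from `x + l q` by an
integer. Hence `f^[2j] x = x + 2jq - 2 ∑_{i<j} (C(2i+1) - C(2i))` with `C l = ⌈x + l q⌉`. If `h` is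
odd and `h q = A` is an integer, then `C (l + h) = C l + A`, so the alternating sum of `C` over
`2h` consecutive indices is `-A`, and `f^[2h] x = x + 2A - 2A = x`. The hypotheses on `b` say exactly
that `k' = 2h` for such an `h`.
-/

open Finset

theorem sum_range_two_mul_neg_one_pow (g : ℕ → ℤ) (n : ℕ) :
    ∑ l ∈ range (2 * n), (-1) ^ l * g l = ∑ i ∈ range n, (g (2 * i) - g (2 * i + 1)) := by
  induction n with
  | zero => simp
  | succ n ih =>
    rw [show 2 * (n + 1) = 2 * n + 1 + 1 by ring, sum_range_succ, sum_range_succ, ih,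
      sum_range_succ, (even_two_mul n).neg_one_pow, (even_two_mul n).add_one.neg_one_pow]
    ring

theorem sum_range_two_mul_neg_one_pow_eq_neg_of_odd {C : ℕ → ℤ} {A : ℤ} {h : ℕ} (hh : Odd h)
    (hC : ∀ l, C (l + h) = C l + A) :
    ∑ l ∈ range (2 * h), (-1) ^ l * C l = -A := by
  have hgeom : ∑ l ∈ range h, (-1 : ℤ) ^ l = 1 := by
    rw [neg_one_geom_sum, if_neg (Nat.not_even_iff_odd.mpr hh)]
  have hshift : ∀ l, (-1 : ℤ) ^ (h + l) * C (h + l) = -((-1) ^ l * C l) - (-1) ^ l * A := by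
    intro l
    rw [add_comm h l, hC l, pow_add, hh.neg_one_pow]
    ring
  rw [two_mul, sum_range_add, sum_congr rfl fun l _ => hshift l, sum_sub_distrib,
    sum_neg_distrib, ← sum_mul, hgeom]
  ring

theorem sum_range_odd_sub_even_eq_of_odd {C : ℕ → ℤ} {A : ℤ} {h : ℕ} (hh : Odd h)
    (hC : ∀ l, C (l + h) = C l + A) :
    ∑ i ∈ range h, (C (2 * i + 1) - C (2 * i)) = A := by
  have := sum_range_two_mul_neg_one_pow_eq_neg_of_odd hh hC
  rw [sum_range_two_mul_neg_one_pow] at this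
  rw [← neg_neg A, ← this, ← sum_neg_distrib]
  simp only [neg_sub]

section Iteration

variable {q : ℝ} {Δ : ℕ → ℝ}

theorem add_two_eq_of_rec (hrec : ∀ n, Δ (n + 1) = Δ n + 1 + q - 2 * (⌈Δ n⌉ : ℝ)) (n : ℕ) :
    Δ (n + 2) = Δ n + 2 * q - 2 * ((⌈Δ n + q⌉ - ⌈Δ n⌉ : ℤ) : ℝ) := by
  have hceil : ⌈Δ (n + 1)⌉ = ⌈Δ n + q⌉ + (1 - 2 * ⌈Δ n⌉) := by
    rw [hrec n, ← Int.ceil_add_intCast]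
    push_cast
    ring_nf
  rw [hrec (n + 1), hceil, hrec n]
  push_cast
  ring

theorem add_two_mul_eq_of_rec (hrec : ∀ n, Δ (n + 1) = Δ n + 1 + q - 2 * (⌈Δ n⌉ : ℝ)) (m j : ℕ) :
    Δ (m + 2 * j) = Δ m + 2 * j * q - 2 * ((∑ i ∈ range j,
      (⌈Δ m + ((2 * i + 1 : ℕ) : ℝ) * q⌉ - ⌈Δ m + ((2 * i : ℕ) : ℝ) * q⌉) : ℤ) : ℝ) := by
  induction j with
  | zero => simp
  | succ j ih =>
    rw [mul_add_one, ← add_assoc, add_two_eq_of_rec hrec, sum_range_succ]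
    set s : ℤ := ∑ i ∈ range j,
      (⌈Δ m + ((2 * i + 1 : ℕ) : ℝ) * q⌉ - ⌈Δ m + ((2 * i : ℕ) : ℝ) * q⌉)
    have hshift : Δ (m + 2 * j) = Δ m + ((2 * j : ℕ) : ℝ) * q + ((-2 * s : ℤ) : ℝ) := by
      rw [ih]; push_cast; ring
    have hnext : Δ (m + 2 * j) + q = Δ m + ((2 * j + 1 : ℕ) : ℝ) * q + ((-2 * s : ℤ) : ℝ) := by
      rw [hshift]; push_cast; ring
    rw [hnext, Int.ceil_add_intCast, hshift, Int.ceil_add_intCast]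
    push_cast
    ring

end Iteration

theorem exists_odd_half_period {a b : ℕ} (hb : 0 < b) (hb4 : ¬ 4 ∣ b) {p : ℝ}
    (hp : p = (a : ℝ) / b) :
    ∃ h : ℕ, (if Even b then b else 2 * b) = 2 * h ∧ Odd h ∧ ∃ A : ℤ, (h : ℝ) * (2 * p) = A := by
  rcases Nat.even_or_odd b with ⟨c, rfl⟩ | hodd
  · have hc0 : (c : ℝ) ≠ 0 := by exact_mod_cast (show c ≠ 0 by omega)
    refine ⟨c, by rw [if_pos ⟨c, rfl⟩]; ring, Nat.odd_iff.mpr (by omega), a, ?_⟩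
    rw [hp]; push_cast; field_simp; ring
  · have hb0 : (b : ℝ) ≠ 0 := by positivity
    refine ⟨b, if_neg (Nat.not_even_iff_odd.mpr hodd), hodd, 2 * a, ?_⟩
    rw [hp]; push_cast; field_simp

theorem stmt_11_general (a b : ℕ) (hb : 0 < b)
    (hb4 : ¬ (4 ∣ b)) (p : ℝ) (hp : p = (a : ℝ) / b)
    (k' : ℕ) (hk' : k' = if Even b then b else 2 * b)
    (Δ : ℕ → ℝ) (hrec : ∀ m, Δ (m + 1) = Δ m + 1 + 2 * p - 2 * (⌈Δ m⌉ : ℝ))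
    (m : ℕ) :
    Δ (m + k') = Δ m := by
  obtain ⟨h, hk, hodd, A, hA⟩ := exists_odd_half_period hb hb4 hp
  have hC : ∀ l : ℕ, ⌈Δ m + ((l + h : ℕ) : ℝ) * (2 * p)⌉ = ⌈Δ m + (l : ℝ) * (2 * p)⌉ + A := by
    intro l
    rw [← Int.ceil_add_intCast, ← hA]
    push_cast
    ring_nf
  rw [hk', hk, add_two_mul_eq_of_rec hrec,
    sum_range_odd_sub_even_eq_of_odd (C := fun l : ℕ => ⌈Δ m + (l : ℝ) * (2 * p)⌉) hodd hC, ← hA]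
  ring

/-- Lemma 1: for `p = a/b`, `a, b` coprime, `b` not divisible by `4`, and
`k' = b` (`b` even) or `2b` (`b` odd), the leading iteration is periodic:
`Δ_L(m + k') = Δ_L(m)` under a genericity assumption. -/
theorem stmt_11 (a b : ℕ) (ha : 0 < a) (hb : 0 < b) (hco : Nat.Coprime a b)
    (hb4 : ¬ (4 ∣ b)) (p : ℝ) (hp : p = (a : ℝ) / b)
    (k' : ℕ) (hk' : k' = if Even b then b else 2 * b)
    (Δ : ℕ → ℝ) (hrec : ∀ m, Δ (m + 1) = Δ m + 1 + 2 * p - 2 * (⌈Δ m⌉ : ℝ))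
    (m : ℕ) (hgen : ∀ l : ℕ, l < k' → ¬ ∃ z : ℤ, Δ m + 2 * l * p = z) :
    Δ (m + k') = Δ m :=
  stmt_11_general a b hb hb4 p hp k' hk' Δ hrec m
end

section
/- Let p = a/b with a, b coprime positive integers, b mod 4 ≠ 0, k' = b (b even) or 2b (b odd), and let Δ_L satisfy the recursion Δ_L(m+1) = Δ_L(m) + 1 + 2p - 2⌈Δ_L(m)⌉ with initial value |Δ_L(1)| < 1. Then |Δ_L(m)| < k'p + 2 for all m in a full period 1 ≤ m ≤ k'. -/
/-!
Write `Δ (m + 1) = f (Δ m)` with `f x = x + 1 + 2p - 2⌈x⌉ = 2p - x + O(1)`, so `Δ m + Δ (m + 1)`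
stays within `1` of `2p`. Over `2s` steps `Δ` rises by at most `4ps` (the two ceilings sum to at
least `1`) and falls by less than `4ps + 2`. Since `f (x + k) = f x - k` for `k ∈ ℤ` and `n` steps
shift `Δ` by `2pn` modulo `ℤ`, an odd `h` with `2ph ∈ ℤ` makes `Δ` periodic with period `2h = k'`.
Bounding `Δ m` forward from the start of the period and backward from its end, the better of the
two bounds uses at most half of the total drift `4ph = 2k'p`.
-/

def IsLeadingOrbit (p : ℝ) (Δ : ℕ → ℝ) : Prop :=
  ∀ m, Δ (m + 1) = Δ m + 1 + 2 * p - 2 * (⌈Δ m⌉ : ℝ)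

namespace IsLeadingOrbit

variable {p : ℝ} {Δ : ℕ → ℝ}

theorem two_mul_sub_ceil_lt (hΔ : IsLeadingOrbit p Δ) (m : ℕ) :
    2 * p - ⌈Δ m⌉ < Δ (m + 1) := by
  linarith [hΔ m, Int.ceil_lt_add_one (Δ m)]

theorem two_mul_sub_one_lt_add_succ (hΔ : IsLeadingOrbit p Δ) (m : ℕ) :
    2 * p - 1 < Δ m + Δ (m + 1) := by
  linarith [hΔ.two_mul_sub_ceil_lt m, Int.ceil_lt_add_one (Δ m)]

theorem add_succ_le (hΔ : IsLeadingOrbit p Δ) (m : ℕ) : Δ m + Δ (m + 1) ≤ 2 * p + 1 := by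
  linarith [hΔ m, Int.le_ceil (Δ m)]

theorem add_two_le (hΔ : IsLeadingOrbit p Δ) (hp : 0 ≤ p) (m : ℕ) :
    Δ (m + 2) ≤ Δ m + 4 * p := by
  have hceil : 1 ≤ ⌈Δ m⌉ + ⌈Δ (m + 1)⌉ := by
    have : (-⌈Δ m⌉ : ℤ) < ⌈Δ (m + 1)⌉ :=
      Int.lt_ceil.mpr (by push_cast; linarith [hΔ.two_mul_sub_ceil_lt m])
    omega
  have hceil' : (1 : ℝ) ≤ ⌈Δ m⌉ + ⌈Δ (m + 1)⌉ := by exact_mod_cast hceil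
  linarith [hΔ m, hΔ (m + 1)]

theorem add_two_mul_le (hΔ : IsLeadingOrbit p Δ) (hp : 0 ≤ p) (j s : ℕ) :
    Δ (j + 2 * s) ≤ Δ j + 4 * p * s := by
  induction s with
  | zero => simp
  | succ s ih =>
    rw [show j + 2 * (s + 1) = j + 2 * s + 2 by ring]
    push_cast
    linarith [hΔ.add_two_le hp (j + 2 * s)]

theorem add_add_two_mul_succ_le (hΔ : IsLeadingOrbit p Δ) (hp : 0 ≤ p) (j s : ℕ) :
    Δ j + Δ (j + 2 * s + 1) ≤ 2 * p + 1 + 4 * p * s := by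
  rw [show j + 2 * s + 1 = j + 1 + 2 * s by ring]
  linarith [hΔ.add_succ_le j, hΔ.add_two_mul_le hp (j + 1) s]

theorem lt_add_two_mul (hΔ : IsLeadingOrbit p Δ) (hp : 0 ≤ p) (j s : ℕ) :
    Δ j < Δ (j + 2 * s) + 4 * p * s + 2 := by
  linarith [hΔ.two_mul_sub_one_lt_add_succ (j + 2 * s), hΔ.add_add_two_mul_succ_le hp j s]

theorem exists_int_eq_add (hΔ : IsLeadingOrbit p Δ) (m n : ℕ) :
    ∃ k : ℤ, Δ (m + n) = Δ m + 2 * p * n + k := by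
  induction n with
  | zero => exact ⟨0, by simp⟩
  | succ n ih =>
    obtain ⟨k, hk⟩ := ih
    refine ⟨k + 1 - 2 * ⌈Δ (m + n)⌉, ?_⟩
    rw [← add_assoc, hΔ, hk]
    push_cast
    ring

theorem eq_add_neg_one_pow_mul (hΔ : IsLeadingOrbit p Δ) {i j : ℕ} {k : ℤ}
    (hij : Δ j = Δ i + k) (n : ℕ) : Δ (j + n) = Δ (i + n) + (-1) ^ n * k := by
  induction n with
  | zero => simpa using hij
  | succ n ih =>
    have hceil : ⌈Δ (j + n)⌉ = ⌈Δ (i + n)⌉ + (-1) ^ n * k := by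
      rw [ih, ← Int.ceil_add_intCast]
      push_cast
      rfl
    rw [← add_assoc, ← add_assoc, hΔ, hΔ, hceil, ih]
    push_cast
    ring

theorem add_two_mul_eq (hΔ : IsLeadingOrbit p Δ) {h : ℕ} (hh : Odd h) {A : ℤ}
    (hA : 2 * p * h = A) (m : ℕ) : Δ (m + 2 * h) = Δ m := by
  obtain ⟨k, hk⟩ := hΔ.exists_int_eq_add m h
  have hshift := hΔ.eq_add_neg_one_pow_mul (i := m) (j := m + h) (k := A + k)
    (by rw [hk, hA]; push_cast; ring) h
  rw [hh.neg_one_pow, show m + h + h = m + 2 * h by ring] at hshift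
  rw [hshift, hk, hA]
  push_cast
  ring

theorem abs_odd_lt (hΔ : IsLeadingOrbit p Δ) (hp : 0 ≤ p) {h : ℕ}
    (hper : Δ (1 + 2 * h) = Δ 1) (hinit : |Δ 1| < 1) {s : ℕ} (hs : s ≤ h) :
    |Δ (1 + 2 * s)| < 2 * p * h + 2 := by
  obtain ⟨r, rfl⟩ := Nat.exists_eq_add_of_le hs
  have hfwd₁ := hΔ.add_two_mul_le hp 1 s
  have hfwd₂ := hΔ.lt_add_two_mul hp 1 s
  have hbwd₁ := hΔ.add_two_mul_le hp (1 + 2 * s) r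
  have hbwd₂ := hΔ.lt_add_two_mul hp (1 + 2 * s) r
  rw [show 1 + 2 * s + 2 * r = 1 + 2 * (s + r) by ring, hper] at hbwd₁ hbwd₂
  rw [abs_lt] at hinit ⊢
  push_cast
  constructor <;> linarith

theorem abs_even_lt (hΔ : IsLeadingOrbit p Δ) (hp : 0 ≤ p) {h : ℕ}
    (hper : ∀ m, Δ (m + 2 * h) = Δ m) (hinit : |Δ 1| < 1) {s : ℕ} (hs : s < h) :
    |Δ (2 + 2 * s)| < 2 * p * h + 2 := by
  obtain ⟨r, rfl⟩ := Nat.exists_eq_add_of_lt hs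
  rw [abs_lt] at hinit ⊢
  have hΔ₂ : 2 * p - 1 < Δ 2 := by
    have : ⌈Δ 1⌉ ≤ 1 := Int.ceil_le.mpr (by push_cast; linarith)
    have : (⌈Δ 1⌉ : ℝ) ≤ 1 := by exact_mod_cast this
    linarith [hΔ.two_mul_sub_ceil_lt 1]
  -- `Δ 2` is only known up to `2p ± 1`, so the upper bound is anchored at the odd indices instead.
  have hupper₁ := hΔ.add_add_two_mul_succ_le hp 1 s
  have hupper₂ := hΔ.add_add_two_mul_succ_le hp (2 + 2 * s) r
  rw [show 2 + 2 * s + 2 * r + 1 = 1 + 2 * (s + r + 1) by ring, hper] at hupper₂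
  have hlower₁ := hΔ.lt_add_two_mul hp 2 s
  have hlower₂ := hΔ.add_two_mul_le hp (2 + 2 * s) (r + 1)
  rw [show 2 + 2 * s + 2 * (r + 1) = 2 + 2 * (s + r + 1) by ring, hper] at hlower₂
  rw [show 1 + 2 * s + 1 = 2 + 2 * s by ring] at hupper₁
  push_cast at hupper₂ hlower₂ ⊢
  constructor <;> linarith

end IsLeadingOrbit

theorem exists_odd_half_of_not_four_dvd {b : ℕ} (hb4 : ¬ 4 ∣ b) :
    ∃ h c : ℕ, Odd h ∧ (if Even b then b else 2 * b) = 2 * h ∧ 2 * h = b * c := by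
  by_cases hb : Even b
  · obtain ⟨t, rfl⟩ := hb
    refine ⟨t, 1, ?_, by simp [two_mul], by ring⟩
    rcases Nat.even_or_odd t with ⟨r, rfl⟩ | ht
    · exact absurd ⟨r, by ring⟩ hb4
    · exact ht
  · exact ⟨b, 2, Nat.not_even_iff_odd.mp hb, if_neg hb, by ring⟩

theorem stmt_14_general (a b : ℕ)
    (hb4 : ¬ (4 ∣ b)) (p : ℝ) (hp : p = (a : ℝ) / b)
    (k' : ℕ) (hk' : k' = if Even b then b else 2 * b)
    (Δ : ℕ → ℝ) (hrec : ∀ m, Δ (m + 1) = Δ m + 1 + 2 * p - 2 * (⌈Δ m⌉ : ℝ))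
    (hinit : |Δ 1| < 1) :
    ∀ m, 1 ≤ m → m ≤ k' → |Δ m| < k' * p + 2 := by
  have hΔ : IsLeadingOrbit p Δ := hrec
  have hp0 : 0 ≤ p := by rw [hp]; positivity
  have hb0 : (b : ℝ) ≠ 0 := by
    rintro hb0
    exact hb4 (by rw [Nat.cast_eq_zero.mp hb0]; exact dvd_zero 4)
  obtain ⟨h, c, hh, hk'h, hhc⟩ := exists_odd_half_of_not_four_dvd hb4
  have hA : 2 * p * h = ((a * c : ℕ) : ℤ) := by
    have : (2 * h : ℝ) = b * c := by exact_mod_cast hhc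
    push_cast
    calc 2 * p * h = a / b * (2 * h) := by rw [hp]; ring
      _ = a * c := by rw [this]; field_simp
  have hper := hΔ.add_two_mul_eq hh hA
  have hk'p : (k' : ℝ) * p = 2 * p * h := by rw [hk', hk'h]; push_cast; ring
  intro m hm1 hmk
  rw [hk'p]
  rcases Nat.even_or_odd' m with ⟨t, rfl | rfl⟩
  · obtain ⟨s, rfl⟩ : ∃ s, t = s + 1 := ⟨t - 1, by omega⟩
    simpa [mul_add, add_comm] using hΔ.abs_even_lt hp0 hper hinit (s := s) (by omega)
  · simpa [add_comm] using hΔ.abs_odd_lt hp0 (hper 1) hinit (s := t) (by omega)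

/-- Lemma 4: along a full period `1 ≤ m ≤ k'` of the leading iteration with
`|Δ_L(1)| < 1`, all values are bounded: `|Δ_L(m)| < k' p + 2`. -/
theorem stmt_14 (a b : ℕ) (ha : 0 < a) (hb : 0 < b) (hco : Nat.Coprime a b)
    (hb4 : ¬ (4 ∣ b)) (p : ℝ) (hp : p = (a : ℝ) / b)
    (k' : ℕ) (hk' : k' = if Even b then b else 2 * b)
    (Δ : ℕ → ℝ) (hrec : ∀ m, Δ (m + 1) = Δ m + 1 + 2 * p - 2 * (⌈Δ m⌉ : ℝ))
    (hinit : |Δ 1| < 1) :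
    ∀ m, 1 ≤ m → m ≤ k' → |Δ m| < k' * p + 2 :=
  stmt_14_general a b hb4 p hp k' hk' Δ hrec hinit
end

section
/- Fix coprime positive integers a, b with b not divisible by 4, p = a/b, and k' = b (b even) or 2b (b odd). Suppose 0 < |Δ| < 1/k'. Then the set { ((Δ + 2(m-1)p + 1/2) mod 1) - 1/2 : m = 1, ..., k'/2 } equals the lattice { -1/2 + 1/k' + Δ, -1/2 + 3/k' + Δ, ..., 1/2 - 1/k' + Δ }, and exactly one element of this set has absolute value less than 1/k' (namely Δ itself, at m = 1). -/
/-!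
Write `k' = 2n` with `n = 2s + 1` odd and `2p = g/n` with `g` coprime to `n`. The `m`-th value is
the representative in `[-1/2, 1/2)` of `Δ + (m-1)g/n` modulo `1`. Because `|Δ| < 1/(2n)`, this is
`Δ + t/n`, where `t ∈ [-s, s]` is the centred residue of `(m-1)g` modulo `n`; that is the lattice
point of index `i = t + s`. Multiplication by `g` permutes the residues modulo `n`, so every
lattice point is attained, and only `t = 0` gives a value smaller than `1/(2n)` in absolute
value, which forces `n ∣ m - 1`, i.e. `m = 1`.
-/

lemma Int.fract_add_half_sub_half_eq {y : ℝ} (k : ℤ) (h₁ : -(1 / 2) ≤ y - k)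
    (h₂ : y - k < 1 / 2) :
    Int.fract (y + 1 / 2) - 1 / 2 = y - k := by
  have : Int.fract (y + 1 / 2) = y - k + 1 / 2 :=
    Int.fract_eq_iff.2 ⟨by linarith, by linarith, k, by ring⟩
  linarith

lemma exists_odd_coprime_of_not_four_dvd {a b : ℕ} (hco : a.Coprime b) (hb4 : ¬ 4 ∣ b) :
    ∃ n g : ℕ, (if Even b then b else 2 * b) = 2 * n ∧ Odd n ∧ g.Coprime n ∧
      2 * ((a : ℝ) / b) = g / n := by
  by_cases hb : Even b
  · obtain ⟨c, rfl⟩ := even_iff_two_dvd.1 hb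
    have hc : Odd c := by
      rcases Nat.even_or_odd c with ⟨d, rfl⟩ | hc
      · exact absurd ⟨d, by ring⟩ hb4
      · exact hc
    refine ⟨c, a, if_pos hb, hc, Nat.Coprime.coprime_dvd_right ⟨2, by ring⟩ hco, ?_⟩
    push_cast
    field_simp
  · refine ⟨b, 2 * a, if_neg hb, Nat.not_even_iff_odd.1 hb,
      Nat.Coprime.mul_left (Nat.coprime_two_left.2 (Nat.not_even_iff_odd.1 hb)) hco, ?_⟩
    push_cast
    ring

lemma ZMod.exists_lt_natCast_mul_eq {n g : ℕ} [NeZero n] (hg : g.Coprime n) (c : ZMod n) :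
    ∃ r < n, ((r * g : ℕ) : ZMod n) = c := by
  set u := ZMod.unitOfCoprime g hg
  refine ⟨(c * ↑u⁻¹).val, ZMod.val_lt _, ?_⟩
  rw [Nat.cast_mul, ZMod.natCast_zmod_val, ← ZMod.coe_unitOfCoprime g hg, mul_assoc,
    Units.inv_mul, mul_one]

lemma ZMod.eq_zero_of_natCast_mul_eq_zero {n g r : ℕ} (hg : g.Coprime n) (hr : r < n)
    (h : ((r * g : ℕ) : ZMod n) = 0) : r = 0 :=
  Nat.eq_zero_of_dvd_of_lt
    (hg.symm.dvd_of_dvd_mul_right ((ZMod.natCast_eq_zero_iff _ _).1 h)) hr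

section OddModulus

variable {n s : ℕ} (hn : n = 2 * s + 1) {Δ : ℝ} (hΔ : |Δ| < 1 / (2 * n))
include hn hΔ

lemma fract_add_div_add_half_sub_half {j i : ℕ} (hi : i < n) (hj : (j : ZMod n) = i - s) :
    Int.fract (Δ + j / n + 1 / 2) - 1 / 2 = -(1 / 2) + (2 * i + 1) / (2 * n) + Δ := by
  obtain ⟨k, hk⟩ : (n : ℤ) ∣ j - ((i : ℤ) - s) := by
    rw [← ZMod.intCast_eq_intCast_iff_dvd_sub]; push_cast; exact hj.symm
  have hn0 : (0 : ℝ) < n := by rw [hn]; positivity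
  have hnR : (n : ℝ) = 2 * s + 1 := by exact_mod_cast hn
  have hkR : (j : ℝ) = i - s + n * k := by
    rw [sub_eq_iff_eq_add'] at hk; exact_mod_cast hk
  set u : ℝ := (2 * i + 1) / (2 * n) with hu
  have hu₁ : 1 / (2 * n) ≤ u :=
    div_le_div_of_nonneg_right (by linarith [(i.cast_nonneg : (0 : ℝ) ≤ i)]) (by positivity)
  have hu₂ : u ≤ 1 - 1 / (2 * n) := by
    have hi' : (i : ℝ) + 1 ≤ n := by exact_mod_cast hi
    rw [hu, one_sub_div (by positivity)]; gcongr; linarith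
  have hju : (j : ℝ) / n - k = u - 1 / 2 := by
    rw [hu, hkR]; field_simp; rw [hnR]; ring
  have hΔ' := abs_lt.1 hΔ
  rw [Int.fract_add_half_sub_half_eq k] <;> linarith

lemma eq_middle_of_abs_lt {i : ℕ} (h : |-(1 / 2) + (2 * i + 1) / (2 * n) + Δ| < 1 / (2 * n)) :
    i = s := by
  have hn0 : (0 : ℝ) < n := by rw [hn]; positivity
  have hnR : (n : ℝ) = 2 * s + 1 := by exact_mod_cast hn
  have hpt : -(1 / 2) + (2 * i + 1) / (2 * n) + Δ = ((i : ℤ) - s : ℤ) / n + Δ := by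
    push_cast; field_simp; rw [hnR]; ring
  have hlt : |(((i : ℤ) - s : ℤ) : ℝ)| / n < 1 / n := by
    calc |(((i : ℤ) - s : ℤ) : ℝ)| / n = |(((i : ℤ) - s : ℤ) : ℝ) / n + Δ - Δ| := by
          rw [add_sub_cancel_right, abs_div, abs_of_pos hn0]
      _ ≤ |(((i : ℤ) - s : ℤ) : ℝ) / n + Δ| + |Δ| := abs_sub _ _
      _ < 1 / (2 * n) + 1 / (2 * n) := by rw [← hpt]; gcongr
      _ = 1 / n := by field_simp; norm_num
  rw [div_lt_div_iff_of_pos_right hn0, ← Int.cast_abs, ← Int.cast_one, Int.cast_lt,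
    Int.abs_lt_one_iff] at hlt
  omega

lemma fract_add_two_mul_sub_one_mul {g : ℕ} {p : ℝ} (hp : 2 * p = g / n) {m i : ℕ}
    (hm : 1 ≤ m) (hi : i < n) (h : (((m - 1) * g : ℕ) : ZMod n) = i - s) :
    Int.fract (Δ + 2 * ((m : ℝ) - 1) * p + 1 / 2) - 1 / 2 =
      -(1 / 2) + (2 * i + 1) / (2 * n) + Δ := by
  have hmp : 2 * ((m : ℝ) - 1) * p = (((m - 1) * g : ℕ) : ℝ) / n := by
    rw [mul_right_comm, hp, Nat.cast_mul, Nat.cast_sub hm]; push_cast; ring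
  rw [hmp]
  exact fract_add_div_add_half_sub_half hn hΔ hi h

end OddModulus

theorem stmt_15_general (a b : ℕ) (hco : Nat.Coprime a b)
    (hb4 : ¬ (4 ∣ b)) (p : ℝ) (hp : p = (a : ℝ) / b)
    (k' : ℕ) (hk' : k' = if Even b then b else 2 * b)
    (Δ : ℝ) (hΔ1 : |Δ| < 1 / k') :
    ((fun m : ℕ => Int.fract (Δ + 2 * ((m : ℝ) - 1) * p + 1/2) - 1/2) ''
        (Set.Icc 1 (k' / 2))
      = {y : ℝ | ∃ j : ℕ, j < k' / 2 ∧ y = -(1/2) + (2 * j + 1) / k' + Δ}) ∧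
    (Int.fract (Δ + 2 * ((1 : ℝ) - 1) * p + 1/2) - 1/2 = Δ) ∧
    (∀ m ∈ Set.Icc 1 (k' / 2),
      |Int.fract (Δ + 2 * ((m : ℝ) - 1) * p + 1/2) - 1/2| < 1 / k' → m = 1) := by
  obtain ⟨n, g, hk'n, ⟨s, hn⟩, hg, h2p⟩ := exists_odd_coprime_of_not_four_dvd hco hb4
  rw [← hp] at h2p
  rw [← hk'] at hk'n
  subst hk'n
  have : NeZero n := ⟨by omega⟩
  rw [Nat.mul_div_cancel_left n two_pos]
  push_cast at hΔ1 ⊢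
  have hclass (m : ℕ) : ∃ i < n, (((m - 1) * g : ℕ) : ZMod n) = i - s :=
    ⟨(((m - 1) * g : ℕ) + s : ZMod n).val, ZMod.val_lt _, by
      rw [ZMod.natCast_zmod_val, add_sub_cancel_right]⟩
  refine ⟨Set.ext fun y => ⟨?_, ?_⟩, ?_, ?_⟩
  · rintro ⟨m, ⟨hm, -⟩, rfl⟩
    obtain ⟨i, hi, hmi⟩ := hclass m
    exact ⟨i, hi, fract_add_two_mul_sub_one_mul hn hΔ1 h2p hm hi hmi⟩
  · rintro ⟨i, hi, rfl⟩
    obtain ⟨r, hr, hrg⟩ := ZMod.exists_lt_natCast_mul_eq hg (i - s : ZMod n)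
    exact ⟨r + 1, ⟨by omega, by omega⟩,
      fract_add_two_mul_sub_one_mul hn hΔ1 h2p (by omega) hi (by simpa using hrg)⟩
  · have hΔ' := abs_lt.1 hΔ1
    have hn1 : (1 : ℝ) ≤ n := by exact_mod_cast NeZero.one_le
    have : 1 / (2 * (n : ℝ)) ≤ 1 / 2 := by gcongr; linarith
    rw [Int.fract_add_half_sub_half_eq 0] <;> push_cast <;> linarith
  · rintro m ⟨hm, hmn⟩ hlt
    obtain ⟨i, hi, hmi⟩ := hclass m
    rw [fract_add_two_mul_sub_one_mul hn hΔ1 h2p hm hi hmi] at hlt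
    rw [eq_middle_of_abs_lt hn hΔ1 hlt, sub_self] at hmi
    have := ZMod.eq_zero_of_natCast_mul_eq_zero hg (by omega) hmi
    omega

/-- Lemma 3 (lattice structure): for `p = a/b`, `b` not divisible by `4`,
`k' = b` (`b` even) or `2b` (`b` odd), and `0 < |Δ| < 1/k'`, the values
`((Δ + 2(m-1)p + 1/2) mod 1) - 1/2` for `m = 1, …, k'/2` fill the lattice
`{-1/2 + (2j+1)/k' + Δ : j = 0, …, k'/2 - 1}`, and exactly one of them (namely `Δ`,
at `m = 1`) has absolute value less than `1/k'`. -/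
theorem stmt_15 (a b : ℕ) (ha : 0 < a) (hb : 0 < b) (hco : Nat.Coprime a b)
    (hb4 : ¬ (4 ∣ b)) (p : ℝ) (hp : p = (a : ℝ) / b)
    (k' : ℕ) (hk' : k' = if Even b then b else 2 * b)
    (Δ : ℝ) (hΔ0 : 0 < |Δ|) (hΔ1 : |Δ| < 1 / k') :
    ((fun m : ℕ => Int.fract (Δ + 2 * ((m : ℝ) - 1) * p + 1/2) - 1/2) ''
        (Set.Icc 1 (k' / 2))
      = {y : ℝ | ∃ j : ℕ, j < k' / 2 ∧ y = -(1/2) + (2 * j + 1) / k' + Δ}) ∧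
    (Int.fract (Δ + 2 * ((1 : ℝ) - 1) * p + 1/2) - 1/2 = Δ) ∧
    (∀ m ∈ Set.Icc 1 (k' / 2),
      |Int.fract (Δ + 2 * ((m : ℝ) - 1) * p + 1/2) - 1/2| < 1 / k' → m = 1) :=
  stmt_15_general a b hco hb4 p hp k' hk' Δ hΔ1
end

section
/- Let 0 < p < 1/2 with bp = a for coprime positive integers a, b, b mod 4 ≠ 0, k' = b (b even) or 2b (b odd), and 0 < |Δ| < 1/k' with Δ irrational. Then 2p·Σ_{n=0}^{k'/2 - 1} ⌈Δ + 4pn⌉ = (k'p/2)(2k'p + 1) - 2k'p² + p·sgn(Δ). -/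
/-!
Write `k' = 2c` and `4p = D/c` with `D` coprime to `c` (`c = b, D = 4a` for odd `b`;
`c = b/2, D = 2a` for `b ≡ 2 mod 4`). For `0 < n < c` the point `Dn/c` lies at distance at least
`1/c > |Δ|` from every integer, so `⌈Δ + Dn/c⌉ = ⌊Dn/c⌋ + 1`, while `⌈Δ⌉` records the sign of `Δ`.
The floors pair up as `⌊Dn/c⌋ + ⌊D(c-n)/c⌋ = D - 1`, which evaluates the sum.
-/

open Finset

theorem Nat.mul_div_add_mul_sub_div_add_one {D c k : ℕ} (hco : D.Coprime c) (hk : 0 < k)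
    (hkc : k < c) : D * k / c + D * (c - k) / c + 1 = D := by
  have hsum : D * k + D * (c - k) = D * c := by rw [← Nat.mul_add, Nat.add_sub_cancel' hkc.le]
  have hndvd : ¬ c ∣ D * k := fun h => by
    have := Nat.le_of_dvd hk (hco.symm.dvd_of_dvd_mul_left h)
    omega
  have hle := Nat.le_mod_add_mod_of_dvd_add_of_not_dvd (hsum ▸ dvd_mul_left c D) hndvd
  rw [← Nat.add_div_eq_of_le_mod_add_mod hle (by omega), hsum, Nat.mul_div_cancel D (by omega)]

theorem Nat.two_mul_sum_Ico_mul_div {D c : ℕ} (hco : D.Coprime c) :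
    2 * ∑ n ∈ Ico 1 c, D * n / c = (c - 1) * (D - 1) := by
  have hreflect : ∑ n ∈ Ico 1 c, D * (c - n) / c = ∑ n ∈ Ico 1 c, D * n / c := by
    simpa using sum_Ico_reflect (fun n => D * n / c) 1 c.le_succ
  calc 2 * (∑ n ∈ Ico 1 c, D * n / c)
    _ = ∑ n ∈ Ico 1 c, (D * n / c + D * (c - n) / c) := by
        rw [two_mul, sum_add_distrib, hreflect]
    _ = ∑ _n ∈ Ico 1 c, (D - 1) := by
        refine sum_congr rfl fun n hn => Nat.eq_sub_of_add_eq ?_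
        exact Nat.mul_div_add_mul_sub_div_add_one hco (mem_Ico.1 hn).1 (mem_Ico.1 hn).2
    _ = (c - 1) * (D - 1) := by rw [sum_const, Nat.card_Ico, smul_eq_mul]

theorem Int.ceil_add_natCast_div_of_not_dvd {Δ : ℝ} {m c : ℕ} (hc : 0 < c) (hm : ¬ c ∣ m)
    (hΔ : |Δ| * c < 1) : ⌈Δ + m / c⌉ = (m / c : ℕ) + 1 := by
  set q := m / c
  set r := m % c
  have hr : 1 ≤ r ∧ r + 1 ≤ c := by
    have := Nat.mod_lt m hc
    have := (Nat.dvd_iff_mod_eq_zero).not.1 hm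
    omega
  have hcR : (0 : ℝ) < c := by exact_mod_cast hc
  have hrR : (1 : ℝ) ≤ r ∧ (r : ℝ) + 1 ≤ c := by exact_mod_cast hr
  have hdecomp : (m : ℝ) / c = q + r / c := by
    have : (m : ℝ) = c * q + r := by exact_mod_cast (Nat.div_add_mod m c).symm
    field_simp
    linarith
  have hlow : -Δ < r / c := by
    rw [lt_div_iff₀ hcR]
    nlinarith [neg_abs_le Δ]
  have hupp : r / c ≤ 1 - Δ := by
    rw [div_le_iff₀ hcR]
    nlinarith [le_abs_self Δ]
  rw [Int.ceil_eq_iff, hdecomp]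
  push_cast
  constructor <;> linarith

theorem Int.cast_ceil_eq_one_add_sign_div_two {Δ : ℝ} (hΔ0 : Δ ≠ 0) (hΔ : |Δ| < 1) :
    (⌈Δ⌉ : ℝ) = (1 + Real.sign Δ) / 2 := by
  rcases hΔ0.lt_or_gt with hneg | hpos
  · rw [Real.sign_of_neg hneg, Int.ceil_eq_zero_iff.2 ⟨by linarith [neg_abs_le Δ], hneg.le⟩]
    norm_num
  · have hle : Δ ≤ 1 := by linarith [le_abs_self Δ]
    rw [Real.sign_of_pos hpos, (Int.ceil_eq_iff (z := 1)).2 ⟨by norm_num [hpos], by norm_num [hle]⟩]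
    norm_num

theorem two_mul_sum_range_ceil_add_mul_div {Δ : ℝ} {c D : ℕ} (hc : 0 < c) (hD : 0 < D)
    (hco : D.Coprime c) (hΔ0 : Δ ≠ 0) (hΔ : |Δ| * c < 1) :
    2 * ∑ n ∈ range c, (⌈Δ + D * n / c⌉ : ℝ)
      = (c - 1) * (D - 1) + 2 * c - 1 + Real.sign Δ := by
  have hceil : ∀ n ∈ Ico 1 c, (⌈Δ + D * n / c⌉ : ℝ) = (D * n / c : ℕ) + 1 := fun n hn => by
    have hndvd : ¬ c ∣ D * n := fun h => by
      have := Nat.le_of_dvd (mem_Ico.1 hn).1 (hco.symm.dvd_of_dvd_mul_left h)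
      have := (mem_Ico.1 hn).2
      omega
    rw [← Nat.cast_mul, Int.ceil_add_natCast_div_of_not_dvd hc hndvd hΔ]
    push_cast
    rfl
  have hΔ1 : |Δ| < 1 := by
    have : (1 : ℝ) ≤ c := by exact_mod_cast hc
    nlinarith [abs_nonneg Δ]
  have hfloor : 2 * ∑ n ∈ Ico 1 c, ((D * n / c : ℕ) : ℝ) = (c - 1) * (D - 1) := by
    have := congrArg (Nat.cast : ℕ → ℝ) (Nat.two_mul_sum_Ico_mul_div hco)
    push_cast [Nat.cast_sub hc, Nat.cast_sub hD] at this
    exact this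
  rw [range_eq_Ico, sum_eq_sum_Ico_succ_bot hc, sum_congr rfl hceil, sum_add_distrib,
    Nat.cast_zero, mul_zero, zero_div, add_zero, Int.cast_ceil_eq_one_add_sign_div_two hΔ0 hΔ1,
    sum_const, Nat.card_Ico, nsmul_one, Nat.cast_sub hc]
  linear_combination hfloor

theorem exists_coprime_four_mul_div_eq {a b : ℕ} (ha : 0 < a) (hb : 0 < b) (hco : a.Coprime b)
    (hb4 : ¬ 4 ∣ b) : ∃ c D : ℕ, 0 < c ∧ 0 < D ∧ (if Even b then b else 2 * b) = 2 * c ∧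
      D.Coprime c ∧ (4 * a / b : ℝ) = D / c := by
  rcases Nat.even_or_odd b with ⟨m, rfl⟩ | hodd
  · have hm : Odd m := Nat.odd_iff.2 (by omega)
    refine ⟨m, 2 * a, by omega, by omega, by simp [two_mul], ?_, ?_⟩
    · exact (Nat.coprime_two_left.2 hm).mul_left
        (hco.coprime_dvd_right (Dvd.intro_left 2 (two_mul m)))
    · push_cast; ring
  · refine ⟨b, 4 * a, hb, by omega, by simp [Nat.not_even_iff_odd.2 hodd], ?_, by push_cast; rfl⟩
    exact Nat.Coprime.mul_left (by simpa using (Nat.coprime_two_left.2 hodd).pow_left 2) hco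

theorem stmt_17_general (a b : ℕ) (ha : 0 < a) (hb : 0 < b) (hco : Nat.Coprime a b)
    (hb4 : ¬ (4 ∣ b)) (p : ℝ) (hp : p = (a : ℝ) / b)
    (k' : ℕ) (hk' : k' = if Even b then b else 2 * b)
    (Δ : ℝ) (hΔ0 : 0 < |Δ|) (hΔ1 : |Δ| < 1 / k') :
    2 * p * ∑ n ∈ range (k' / 2), (⌈Δ + 4 * p * n⌉ : ℝ)
      = (k' * p / 2) * (2 * k' * p + 1) - 2 * k' * p^2 + p * Real.sign Δ := by
  obtain ⟨c, D, hc, hD, hk'c, hDc, hpD⟩ := exists_coprime_four_mul_div_eq ha hb hco hb4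
  obtain rfl : k' = 2 * c := hk'.trans hk'c
  have h4p : 4 * p = D / c := by rw [hp, ← hpD, mul_div_assoc]
  have hΔc : |Δ| * c < 1 := by
    rw [Nat.cast_mul, Nat.cast_two, lt_div_iff₀ (by positivity)] at hΔ1
    nlinarith [abs_nonneg Δ]
  have hsum : ∑ n ∈ range (2 * c / 2), (⌈Δ + 4 * p * n⌉ : ℝ)
      = ∑ n ∈ range c, (⌈Δ + D * n / c⌉ : ℝ) := by
    rw [Nat.mul_div_cancel_left c two_pos]
    refine sum_congr rfl fun n _ => ?_
    rw [h4p, div_mul_eq_mul_div]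
  have hDc4 : (D : ℝ) = 4 * c * p := by
    rw [mul_right_comm, h4p]
    field_simp
  rw [hsum]
  push_cast
  linear_combination p * two_mul_sum_range_ceil_add_mul_div hc hD hDc (abs_pos.1 hΔ0) hΔc
    + (p * c - p) * hDc4

open Finset in
/-- The ceiling sum evaluation: for `p = a/b ∈ (0, 1/2)` with `a, b` coprime, `b` not
divisible by `4`, `k' = b` (`b` even) or `2b` (`b` odd), and irrational `Δ` with
`0 < |Δ| < 1/k'`, one has
`2p Σ_{n=0}^{k'/2-1} ⌈Δ + 4pn⌉ = (k'p/2)(2k'p + 1) - 2k'p² + p·sgn Δ`. -/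
theorem stmt_17 (a b : ℕ) (ha : 0 < a) (hb : 0 < b) (hco : Nat.Coprime a b)
    (hb4 : ¬ (4 ∣ b)) (p : ℝ) (hp : p = (a : ℝ) / b) (hp0 : 0 < p) (hp1 : p < 1/2)
    (k' : ℕ) (hk' : k' = if Even b then b else 2 * b)
    (Δ : ℝ) (hirr : Irrational Δ) (hΔ0 : 0 < |Δ|) (hΔ1 : |Δ| < 1 / k') :
    2 * p * ∑ n ∈ range (k' / 2), (⌈Δ + 4 * p * n⌉ : ℝ)
      = (k' * p / 2) * (2 * k' * p + 1) - 2 * k' * p^2 + p * Real.sign Δ :=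
  stmt_17_general a b ha hb hco hb4 p hp k' hk' Δ hΔ0 hΔ1
end

section
/- Let (p, x) evolve by p(i+1) = p(i) - sgn(x(i)), x(i+1) = x(i) + p(i) - sgn(x(i)) with p(1) = k/2 and x(1) = p(1), where k is a positive integer. Then sgn(x(i)) = +1 for 1 ≤ i ≤ k, and x(k+1) = 0. -/
/-!
While `x` stays positive every step subtracts `1` from `p`, so from `p(1) = x(1) = c` the orbit is
`p(i) = c - (i - 1)` and `x(i) = i (2c - i + 1) / 2`, a downward parabola in `i` that is positive
for `1 ≤ i ≤ 2c` and vanishes at `i = 2c + 1`. With `c = k/2` these are the two claims.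
-/

namespace SignDynamics

variable {c : ℝ} {p x : ℕ → ℝ}

lemma parabola_pos {i : ℕ} (hi : 1 ≤ i) (hic : (i : ℝ) ≤ 2 * c) :
    0 < (i : ℝ) * (2 * c - i + 1) / 2 := by
  have : (1 : ℝ) ≤ i := by exact_mod_cast hi
  have : (0 : ℝ) < 2 * c - i + 1 := by linarith
  positivity

variable (hp1 : p 1 = c) (hx1 : x 1 = c)
    (hp : ∀ i, 1 ≤ i → p (i + 1) = p i - Real.sign (x i))
    (hx : ∀ i, 1 ≤ i → x (i + 1) = x i + p i - Real.sign (x i))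
include hp1 hx1 hp hx

lemma orbit_eq {i : ℕ} (hi : 1 ≤ i) (hic : (i : ℝ) ≤ 2 * c + 1) :
    p i = c - (i - 1) ∧ x i = i * (2 * c - i + 1) / 2 := by
  induction i, hi using Nat.le_induction with
  | base => simp only [hp1, hx1, Nat.cast_one]; constructor <;> ring
  | succ n hn ih =>
    push_cast at hic
    obtain ⟨hpn, hxn⟩ := ih (by linarith)
    have hsign : Real.sign (x n) = 1 :=
      Real.sign_of_pos (hxn ▸ parabola_pos hn (by linarith))
    rw [hp n hn, hx n hn, hsign, hpn, hxn]
    push_cast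
    constructor <;> ring

lemma orbit_pos {i : ℕ} (hi : 1 ≤ i) (hic : (i : ℝ) ≤ 2 * c) : 0 < x i := by
  rw [(orbit_eq hp1 hx1 hp hx hi (by linarith)).2]
  exact parabola_pos hi hic

end SignDynamics

theorem stmt_18_general (k : ℕ) (p x : ℕ → ℝ)
    (hp1 : p 1 = k / 2) (hx1 : x 1 = k / 2)
    (hp : ∀ i, 1 ≤ i → p (i + 1) = p i - Real.sign (x i))
    (hx : ∀ i, 1 ≤ i → x (i + 1) = x i + p i - Real.sign (x i)) :
    (∀ i, 1 ≤ i → i ≤ k → Real.sign (x i) = 1) ∧ x (k + 1) = 0 := by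
  have htwice : 2 * ((k : ℝ) / 2) = k := by ring
  refine ⟨fun i hi hik => Real.sign_of_pos (SignDynamics.orbit_pos hp1 hx1 hp hx hi ?_), ?_⟩
  · rw [htwice]; exact_mod_cast hik
  · rw [(SignDynamics.orbit_eq hp1 hx1 hp hx (Nat.le_add_left 1 k) (by push_cast; linarith)).2]
    push_cast
    ring

/-- Starting from `p(1) = x(1) = k/2` with `k ≥ 1`, the signs are all `+1` for
`1 ≤ i ≤ k` and `x(k+1) = 0`. -/
theorem stmt_18 (k : ℕ) (hk : 0 < k) (p x : ℕ → ℝ)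
    (hp1 : p 1 = k / 2) (hx1 : x 1 = k / 2)
    (hp : ∀ i, 1 ≤ i → p (i + 1) = p i - Real.sign (x i))
    (hx : ∀ i, 1 ≤ i → x (i + 1) = x i + p i - Real.sign (x i)) :
    (∀ i, 1 ≤ i → i ≤ k → Real.sign (x i) = 1) ∧ x (k + 1) = 0 :=
  stmt_18_general k p x hp1 hx1 hp hx
end

section
/- Let n be a positive integer, k = 2n, and consider the evolution p(i+1) = p(i) - sgn(x(i)), x(i+1) = x(i) + p(i) - sgn(x(i)) with initial conditions p(1) = x(1) = n/(2n+1). Then the signs alternate: sgn(x(i)) = (-1)^{i+1} for 1 ≤ i ≤ 2n, and x(2n+1) = 0. -/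
/-! With `c = n/(2n+1)` we have `2c - 1 = -1/(2n+1)`. While `0 < x < 1 - c` and `p = c`, one step
with sign `+1` sends `x` to `x + c - 1 < 0`, and the next step, with sign `-1`, restores `p = c`;
so every two steps `x` drops by exactly `1/(2n+1)` and the momentum returns to `c`. Starting at
`x = c = n/(2n+1)`, the odd iterates are `x(2j+1) = (n-j)/(2n+1)`, which reach `0` at `j = n`. -/

namespace SignOrbit

theorem two_steps_of_pos {p x : ℕ → ℝ}
    (hp : ∀ i, 1 ≤ i → p (i + 1) = p i - Real.sign (x i))
    (hx : ∀ i, 1 ≤ i → x (i + 1) = x i + p i - Real.sign (x i))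
    {i : ℕ} (hi : 1 ≤ i) (hpos : 0 < x i) (hlt : x i + p i < 1) :
    x (i + 1) = x i + p i - 1 ∧ x (i + 2) = x i + 2 * p i - 1 ∧ p (i + 2) = p i := by
  have hx₁ : x (i + 1) = x i + p i - 1 := by rw [hx i hi, Real.sign_of_pos hpos]
  have hp₁ : p (i + 1) = p i - 1 := by rw [hp i hi, Real.sign_of_pos hpos]
  have hsign₁ : Real.sign (x (i + 1)) = -1 := Real.sign_of_neg (by linarith)
  refine ⟨hx₁, ?_, ?_⟩
  · rw [hx (i + 1) (by omega), hsign₁, hx₁, hp₁]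
    ring
  · rw [hp (i + 1) (by omega), hsign₁, hp₁]
    ring

theorem pos_and_add_lt_one {n j : ℕ} (hj : j < n) :
    0 < ((n : ℝ) - j) / (2 * n + 1) ∧
      ((n : ℝ) - j) / (2 * n + 1) + (n : ℝ) / (2 * n + 1) < 1 := by
  have hjn : (j : ℝ) + 1 ≤ n := by exact_mod_cast hj
  have hd : (0 : ℝ) < 2 * n + 1 := by positivity
  refine ⟨div_pos (by linarith) hd, ?_⟩
  rw [← add_div, div_lt_one hd]
  linarith [(j.cast_nonneg : (0 : ℝ) ≤ j)]

theorem odd_iterate_eq {n : ℕ} {p x : ℕ → ℝ}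
    (hp1 : p 1 = (n : ℝ) / (2 * n + 1)) (hx1 : x 1 = (n : ℝ) / (2 * n + 1))
    (hp : ∀ i, 1 ≤ i → p (i + 1) = p i - Real.sign (x i))
    (hx : ∀ i, 1 ≤ i → x (i + 1) = x i + p i - Real.sign (x i)) {j : ℕ} (hj : j ≤ n) :
    x (2 * j + 1) = ((n : ℝ) - j) / (2 * n + 1) ∧ p (2 * j + 1) = (n : ℝ) / (2 * n + 1) := by
  induction j with
  | zero => simpa using ⟨hx1, hp1⟩
  | succ j ih =>
    obtain ⟨hxj, hpj⟩ := ih (by omega)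
    obtain ⟨hpos, hlt⟩ := pos_and_add_lt_one (n := n) (j := j) (by omega)
    rw [← hxj] at hpos
    rw [← hxj, ← hpj] at hlt
    obtain ⟨-, hx₂, hp₂⟩ := two_steps_of_pos hp hx (by omega) hpos hlt
    rw [show 2 * (j + 1) + 1 = 2 * j + 1 + 2 by ring, hx₂, hp₂, hxj, hpj]
    refine ⟨?_, rfl⟩
    field_simp
    push_cast
    ring

theorem odd_pos_and_even_neg {n : ℕ} {p x : ℕ → ℝ}
    (hp1 : p 1 = (n : ℝ) / (2 * n + 1)) (hx1 : x 1 = (n : ℝ) / (2 * n + 1))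
    (hp : ∀ i, 1 ≤ i → p (i + 1) = p i - Real.sign (x i))
    (hx : ∀ i, 1 ≤ i → x (i + 1) = x i + p i - Real.sign (x i)) {j : ℕ} (hj : j < n) :
    0 < x (2 * j + 1) ∧ x (2 * j + 2) < 0 := by
  obtain ⟨hxj, hpj⟩ := odd_iterate_eq hp1 hx1 hp hx hj.le
  obtain ⟨hpos, hlt⟩ := pos_and_add_lt_one hj
  rw [← hxj] at hpos
  rw [← hxj, ← hpj] at hlt
  obtain ⟨hx₁, -⟩ := two_steps_of_pos hp hx (by omega) hpos hlt
  exact ⟨hpos, by rw [hx₁]; linarith⟩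

end SignOrbit

theorem stmt_19_general (n : ℕ) (p x : ℕ → ℝ)
    (hp1 : p 1 = (n : ℝ) / (2 * n + 1)) (hx1 : x 1 = (n : ℝ) / (2 * n + 1))
    (hp : ∀ i, 1 ≤ i → p (i + 1) = p i - Real.sign (x i))
    (hx : ∀ i, 1 ≤ i → x (i + 1) = x i + p i - Real.sign (x i)) :
    (∀ i, 1 ≤ i → i ≤ 2 * n → Real.sign (x i) = (-1 : ℝ)^(i + 1)) ∧
      x (2 * n + 1) = 0 := by
  refine ⟨fun i hi1 hi2 => ?_, by simp [(SignOrbit.odd_iterate_eq hp1 hx1 hp hx le_rfl).1]⟩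
  obtain ⟨j, rfl | rfl⟩ : ∃ j, i = 2 * j + 1 ∨ i = 2 * j + 2 := ⟨(i - 1) / 2, by omega⟩
  · rw [Real.sign_of_pos (SignOrbit.odd_pos_and_even_neg hp1 hx1 hp hx (by omega)).1,
      Even.neg_one_pow ⟨j + 1, by ring⟩]
  · rw [Real.sign_of_neg (SignOrbit.odd_pos_and_even_neg hp1 hx1 hp hx (by omega)).2,
      Odd.neg_one_pow ⟨j + 1, by ring⟩]

/-- Starting from `p(1) = x(1) = n/(2n+1)` with `n ≥ 1`, the signs alternate:
`sgn x(i) = (-1)^(i+1)` for `1 ≤ i ≤ 2n`, and `x(2n+1) = 0`. -/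
theorem stmt_19 (n : ℕ) (hn : 0 < n) (p x : ℕ → ℝ)
    (hp1 : p 1 = (n : ℝ) / (2 * n + 1)) (hx1 : x 1 = (n : ℝ) / (2 * n + 1))
    (hp : ∀ i, 1 ≤ i → p (i + 1) = p i - Real.sign (x i))
    (hx : ∀ i, 1 ≤ i → x (i + 1) = x i + p i - Real.sign (x i)) :
    (∀ i, 1 ≤ i → i ≤ 2 * n → Real.sign (x i) = (-1 : ℝ)^(i + 1)) ∧
      x (2 * n + 1) = 0 :=
  stmt_19_general n p x hp1 hx1 hp hx
end
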